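/- Let Δ ⊂ ℝ^d be a d-dimensional lattice polytope. Then Δ^{FI} = {0} if and only if both Δ and [Δ*] (the convex hull of the lattice points of the polar polytope Δ*) contain 0 in their interiors. -/

import Mathlib

open Finset Pointwise MeasureTheory
noncomputable section

variable {d : ℕ}

/-- Standard pairing on ℝ^d. -/
def pairR (x y : Fin d → ℝ) : ℝ := ∑ i, x i * y i

/-- Embedding of ℤ^d into ℝ^d. -/
def toR (n : Fin d → ℤ) : Fin d → ℝ := fun i => (n i : ℝ)

/-- A point of ℝ^d with integer coordinates. -/
def IsLatticePoint (x : Fin d → ℝ) : Prop := ∀ i, ∃ z : ℤ, x i = (z : ℝ)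

/-- ord_Δ(y) = min_{x ∈ Δ} ⟨x, y⟩. -/
def ordP (Δ : Set (Fin d → ℝ)) (y : Fin d → ℝ) : ℝ := sInf ((fun x => pairR x y) '' Δ)

/-- The Fine interior of Δ. -/
def fineInterior (Δ : Set (Fin d → ℝ)) : Set (Fin d → ℝ) :=
  {x | ∀ n : Fin d → ℤ, n ≠ 0 → ordP Δ (toR n) + 1 ≤ pairR x (toR n)}

/-- A lattice polytope: the convex hull of finitely many lattice points. -/
def IsLatticePolytope (Δ : Set (Fin d → ℝ)) : Prop :=
  ∃ S : Finset (Fin d → ℤ), Δ = convexHull ℝ (toR '' (S : Set (Fin d → ℤ)))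

/-- The polar set Δ* = {y : ⟨x,y⟩ ≥ -1 for all x ∈ Δ}. -/
def polarSet (Δ : Set (Fin d → ℝ)) : Set (Fin d → ℝ) :=
  {y | ∀ x ∈ Δ, -1 ≤ pairR x y}

/-- [P] = convex hull of the lattice points of P. -/
def latticeHull (P : Set (Fin d → ℝ)) : Set (Fin d → ℝ) :=
  convexHull ℝ {x ∈ P | IsLatticePoint x}

/-- Pseudoreflexive polytope: Fine interior {0} and Δ = [[Δ*]*]. -/
def IsPseudoreflexive (Δ : Set (Fin d → ℝ)) : Prop :=
  IsLatticePolytope Δ ∧ fineInterior Δ = {0} ∧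
    Δ = latticeHull (polarSet (latticeHull (polarSet Δ)))

/-- (Exposed) face of Δ cut out by a supporting linear functional. -/
def IsFaceOf (Δ F : Set (Fin d → ℝ)) : Prop :=
  ∃ y : Fin d → ℝ, F = {x ∈ Δ | pairR x y = ordP Δ y}

/-- Dimension of a subset of ℝ^d. -/
def dimSet (S : Set (Fin d → ℝ)) : ℕ := Module.finrank ℝ ↥(vectorSpan ℝ S)

/-- The face of the polar polytope dual to a face F of Δ. -/
def dualFace (Δ F : Set (Fin d → ℝ)) : Set (Fin d → ℝ) :=
  {y ∈ polarSet Δ | ∀ x ∈ F, pairR x y = -1}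

/-- The cone ℝ_{≥0}·Θ over a set Θ. -/
def coneOver (Θ : Set (Fin d → ℝ)) : Set (Fin d → ℝ) :=
  {x | ∃ c : ℝ, 0 ≤ c ∧ ∃ p ∈ Θ, x = c • p}

/-- A face Θ is ordinary if every lattice point of ℝ_{≥0}Θ lies in some dilate lΘ. -/
def IsOrdinaryFace (Θ : Set (Fin d → ℝ)) : Prop :=
  ∀ n : Fin d → ℤ, toR n ∈ coneOver Θ → ∃ l : ℕ, toR n ∈ (l : ℝ) • Θ

/-- Facet: a face of dimension d-1. -/
def IsFacet (Δ Θ : Set (Fin d → ℝ)) : Prop :=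
  IsFaceOf Δ Θ ∧ dimSet Θ + 1 = d

/-!
For `n ∈ ℤ^d` the value `ord_Δ(n)` is an integer attained at a vertex, so `0 ∈ Δ^{FI}` iff
`ord_Δ(n) ≤ -1` for all `n ≠ 0`; this holds once `0 ∈ int Δ`. Conversely, if `0` lay on the
boundary of `Δ`, a supporting functional `v ≥ 0` on `Δ` could be replaced by an integral `n`
with `k • v ≈ n` (simultaneous Dirichlet approximation), still `≥ 0` on the vertices, so that
`ord_Δ(n) ≥ 0`.

Lattice points `w` of `Δ*` have `ord_Δ(w) ≥ -1`, so every `x ∈ Δ^{FI}` pairs nonnegatively with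
`[Δ*]`, which forces `x = 0` when `0 ∈ int [Δ*]`. If instead `u ≠ 0` supports `[Δ*]` at `0`,
then `t • u ∈ Δ^{FI}` for small `t > 0`: for `ord_Δ(n) = -1` the point `n` lies in `Δ*`, and for
`ord_Δ(n) ≤ -2` there is slack, since `ord_Δ(n) ≤ -r ‖n‖₁` for some `r > 0` as `0 ∈ int Δ`.
-/
open Matrix

lemma pairR_eq_dotProduct (x y : Fin d → ℝ) : pairR x y = x ⬝ᵥ y := rfl

@[simp] lemma toR_zero : toR (0 : Fin d → ℤ) = 0 := funext fun _ => Int.cast_zero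

lemma toR_dotProduct_toR (s n : Fin d → ℤ) : toR s ⬝ᵥ toR n = ((s ⬝ᵥ n : ℤ) : ℝ) := by
  simp [dotProduct, toR]

lemma abs_dotProduct_le (x y : Fin d → ℝ) : |x ⬝ᵥ y| ≤ ‖x‖ * ∑ i, |y i| := by
  rw [Finset.mul_sum]
  refine (Finset.abs_sum_le_sum_abs _ _).trans (Finset.sum_le_sum fun i _ => ?_)
  rw [abs_mul]
  exact mul_le_mul_of_nonneg_right (norm_le_pi_norm x i) (abs_nonneg _)

lemma zero_mem_fineInterior_iff (Δ : Set (Fin d → ℝ)) :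
    0 ∈ fineInterior Δ ↔ ∀ n : Fin d → ℤ, n ≠ 0 → ordP Δ (toR n) ≤ -1 := by
  simp only [fineInterior, Set.mem_ofPred_eq, pairR_eq_dotProduct, zero_dotProduct]
  exact forall₂_congr fun _ _ => by constructor <;> intro h <;> linarith

lemma zero_mem_latticeHull_polarSet (Δ : Set (Fin d → ℝ)) : 0 ∈ latticeHull (polarSet Δ) :=
  subset_convexHull ℝ _
    ⟨fun x _ => by simp [pairR_eq_dotProduct], fun _ => ⟨0, by simp⟩⟩

lemma eq_zero_of_forall_dotProduct_nonneg {C : Set (Fin d → ℝ)} {x : Fin d → ℝ}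
    (h0 : 0 ∈ interior C) (h : ∀ y ∈ C, 0 ≤ y ⬝ᵥ x) : x = 0 := by
  have hlim : Filter.Tendsto (fun c : ℝ => -c • x) (nhdsWithin 0 (Set.Ioi 0)) (nhds 0) := by
    have : Continuous fun c : ℝ => -c • x := by fun_prop
    simpa using this.continuousWithinAt.tendsto (x := 0)
  obtain ⟨c, hcC, hc⟩ :=
    ((hlim.eventually (mem_interior_iff_mem_nhds.1 h0)).and self_mem_nhdsWithin).exists
  have hxx : 0 ≤ -c * (x ⬝ᵥ x) := by simpa [smul_dotProduct] using h _ hcC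
  exact dotProduct_self_eq_zero.1 (le_antisymm
    (nonpos_of_mul_nonneg_right (by linarith) (neg_neg_of_pos hc))
    (Finset.sum_nonneg fun i _ => mul_self_nonneg (x i)))

lemma exists_ne_zero_forall_dotProduct_nonneg_of_interior_nonempty {C : Set (Fin d → ℝ)}
    (hC : Convex ℝ C) (hint : (interior C).Nonempty) (h0 : (0 : Fin d → ℝ) ∉ interior C) :
    ∃ v ≠ 0, ∀ x ∈ C, 0 ≤ x ⬝ᵥ v := by
  obtain ⟨f, u, hf, hfC, hu⟩ := geometric_hahn_banach_of_nonempty_interior hC (convex_singleton 0)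
    (Set.disjoint_singleton_right.2 h0) hint (Set.singleton_nonempty 0)
  have hu0 : u ≤ 0 := by simpa using hu 0 rfl
  refine ⟨-(dotProductEquiv ℝ (Fin d)).symm f.toLinearMap, ?_, fun x hx => ?_⟩
  · simpa using fun h => hf (ContinuousLinearMap.coe_injective (by simp [h]))
  · have hfx : f x = (dotProductEquiv ℝ (Fin d)).symm f.toLinearMap ⬝ᵥ x := by
      rw [← dotProductEquiv_apply_apply, LinearEquiv.apply_symm_apply]; rfl
    rw [dotProduct_neg, dotProduct_comm, ← hfx]
    linarith [hfC x hx]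

lemma exists_ne_zero_forall_dotProduct_eq_zero_of_interior_eq_empty {C : Set (Fin d → ℝ)}
    (hC : Convex ℝ C) (hint : interior C = ∅) (h0 : 0 ∈ C) :
    ∃ v ≠ 0, ∀ x ∈ C, x ⬝ᵥ v = 0 := by
  have hspan : vectorSpan ℝ C ≠ ⊤ := fun htop => by
    rw [← AffineSubspace.affineSpan_eq_top_iff_vectorSpan_eq_top_of_nonempty ℝ _ _ ⟨0, h0⟩,
      ← hC.interior_nonempty_iff_affineSpan_eq_top, hint] at htop
    exact Set.not_nonempty_empty htop
  obtain ⟨f, hf, hfC⟩ := Submodule.exists_dual_map_eq_bot_of_lt_top hspan.lt_top inferInstance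
  refine ⟨(dotProductEquiv ℝ (Fin d)).symm f, by simpa using hf, fun x hx => ?_⟩
  have hxC : f x ∈ (vectorSpan ℝ C).map f := ⟨x, by simpa using vsub_mem_vectorSpan ℝ hx h0, rfl⟩
  rw [hfC, Submodule.mem_bot] at hxC
  rw [dotProduct_comm, ← dotProductEquiv_apply_apply, LinearEquiv.apply_symm_apply, hxC]

lemma exists_ne_zero_forall_dotProduct_nonneg_of_zero_mem {C : Set (Fin d → ℝ)}
    (hC : Convex ℝ C) (h0 : 0 ∈ C) (h0' : (0 : Fin d → ℝ) ∉ interior C) :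
    ∃ v ≠ 0, ∀ x ∈ C, 0 ≤ x ⬝ᵥ v := by
  rcases (interior C).eq_empty_or_nonempty with hint | hint
  · obtain ⟨v, hv, hvC⟩ := exists_ne_zero_forall_dotProduct_eq_zero_of_interior_eq_empty hC hint h0
    exact ⟨v, hv, fun x hx => (hvC x hx).ge⟩
  · exact exists_ne_zero_forall_dotProduct_nonneg_of_interior_nonempty hC hint h0'

abbrev polytopeOf (S : Finset (Fin d → ℤ)) : Set (Fin d → ℝ) :=
  convexHull ℝ (toR '' (S : Set (Fin d → ℤ)))

section LatticePolytope

variable {S : Finset (Fin d → ℤ)}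

lemma isLeast_dotProduct_image_polytopeOf (hS : S.Nonempty) (y : Fin d → ℝ) :
    IsLeast ((· ⬝ᵥ y) '' polytopeOf S) (S.inf' hS fun s => toR s ⬝ᵥ y) := by
  obtain ⟨s, hs, hmin⟩ := S.exists_mem_eq_inf' hS fun s => toR s ⬝ᵥ y
  refine ⟨⟨toR s, subset_convexHull ℝ _ ⟨s, hs, rfl⟩, hmin.symm⟩, ?_⟩
  rintro _ ⟨x, hx, rfl⟩
  refine convexHull_min ?_ (convex_halfSpace_ge (f := (· ⬝ᵥ y)) ⟨fun a b => add_dotProduct a b y,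
    fun c a => smul_dotProduct c a y⟩ _) hx
  rintro _ ⟨t, ht, rfl⟩
  exact S.inf'_le (fun s => toR s ⬝ᵥ y) ht

lemma ordP_polytopeOf (hS : S.Nonempty) (y : Fin d → ℝ) :
    ordP (polytopeOf S) y = S.inf' hS fun s => toR s ⬝ᵥ y :=
  (isLeast_dotProduct_image_polytopeOf hS y).csInf_eq

lemma ordP_le_dotProduct {x : Fin d → ℝ} (hS : S.Nonempty) (hx : x ∈ polytopeOf S)
    (y : Fin d → ℝ) : ordP (polytopeOf S) y ≤ x ⬝ᵥ y := by
  rw [ordP_polytopeOf hS]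
  exact (isLeast_dotProduct_image_polytopeOf hS y).2 ⟨x, hx, rfl⟩

lemma exists_ordP_polytopeOf_eq_intCast (hS : S.Nonempty) (n : Fin d → ℤ) :
    ∃ z : ℤ, ordP (polytopeOf S) (toR n) = z := by
  obtain ⟨s, -, hs⟩ := S.exists_mem_eq_inf' hS fun s => toR s ⬝ᵥ toR n
  exact ⟨s ⬝ᵥ n, by rw [ordP_polytopeOf hS, hs, toR_dotProduct_toR]⟩

lemma mem_polarSet_polytopeOf_iff (hS : S.Nonempty) {y : Fin d → ℝ} :
    y ∈ polarSet (polytopeOf S) ↔ -1 ≤ ordP (polytopeOf S) y := by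
  rw [ordP_polytopeOf hS, le_isGLB_iff (isLeast_dotProduct_image_polytopeOf hS y).isGLB]
  simp [polarSet, pairR_eq_dotProduct, lowerBounds]

lemma exists_pos_ordP_le_neg_mul_sum_abs (hS : S.Nonempty) (h0 : 0 ∈ interior (polytopeOf S)) :
    ∃ r > 0, ∀ y : Fin d → ℝ, ordP (polytopeOf S) y ≤ -(r * ∑ i, |y i|) := by
  obtain ⟨ε, hε, hball⟩ := Metric.mem_nhds_iff.1 (mem_interior_iff_mem_nhds.1 h0)
  refine ⟨ε / 2, by positivity, fun y => ?_⟩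
  -- the point `-(ε/2) • sign y` of the box pairs with `y` to `-(ε/2) * ∑ |y i|`
  set z : Fin d → ℝ := -(ε / 2) • fun i => (SignType.sign (y i) : ℝ)
  have hz : z ∈ polytopeOf S := hball <| mem_ball_zero_iff.2 <| by
    refine lt_of_le_of_lt ((pi_norm_le_iff_of_nonneg (by positivity)).2 fun i => ?_)
      (half_lt_self hε)
    have : |(SignType.sign (y i) : ℝ)| ≤ 1 := by cases SignType.sign (y i) <;> simp
    simpa [z, abs_mul, abs_of_pos hε] using mul_le_of_le_one_right (by positivity : 0 ≤ ε / 2) this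
  calc ordP (polytopeOf S) y ≤ z ⬝ᵥ y := ordP_le_dotProduct hS hz y
    _ = -(ε / 2 * ∑ i, |y i|) := by
      simp [z, dotProduct, Finset.mul_sum, mul_assoc, sign_mul_self]

lemma ordP_polytopeOf_le_neg_one (hS : S.Nonempty) (h0 : 0 ∈ interior (polytopeOf S))
    {n : Fin d → ℤ} (hn : n ≠ 0) : ordP (polytopeOf S) (toR n) ≤ -1 := by
  obtain ⟨r, hr, hord⟩ := exists_pos_ordP_le_neg_mul_sum_abs hS h0
  obtain ⟨z, hz⟩ := exists_ordP_polytopeOf_eq_intCast hS n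
  obtain ⟨i, hi⟩ := Function.ne_iff.1 hn
  have hsum : 0 < ∑ j, |toR n j| := lt_of_lt_of_le (by simpa [toR] using hi)
    (Finset.single_le_sum (fun j _ => abs_nonneg (toR n j)) (Finset.mem_univ i))
  have hzneg : (z : ℝ) < 0 := by nlinarith [hord (toR n)]
  have : z < 0 := by exact_mod_cast hzneg
  rw [hz]
  exact_mod_cast Int.le_sub_one_of_lt this

end LatticePolytope

lemma exists_nat_int_norm_smul_sub_toR_lt (v : Fin d → ℝ) {ε : ℝ} (hε : 0 < ε) :
    ∃ k : ℕ, 0 < k ∧ ∃ n : Fin d → ℤ, ‖(k : ℝ) • v - toR n‖ < ε := by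
  obtain ⟨N, hN⟩ := exists_nat_gt (1 / ε)
  have hNpos : (0 : ℝ) < N := lt_trans (by positivity) hN
  have hNε : 1 / (N : ℝ) < ε := by rwa [div_lt_iff₀ hNpos, mul_comm, ← div_lt_iff₀ hε]
  -- pigeonhole on the cell `⌊N * fract (k • v)⌋` of the `N ^ d + 1` multiples `k • v`, `k ≤ N ^ d`
  set cell : ℕ → Fin d → ℤ := fun k i => ⌊N * Int.fract (k * v i)⌋
  have hmaps : Set.MapsTo cell (Finset.range (N ^ d + 1) : Set ℕ)
      (Fintype.piFinset fun _ : Fin d => Finset.Ico (0 : ℤ) N : Set (Fin d → ℤ)) := fun k _ => by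
    simp only [Finset.mem_coe, Fintype.mem_piFinset, Finset.mem_Ico, Int.floor_nonneg,
      Int.floor_lt, cell]
    refine fun i => ⟨mul_nonneg hNpos.le (Int.fract_nonneg _), ?_⟩
    simpa using mul_lt_of_lt_one_right hNpos (Int.fract_lt_one (k * v i))
  obtain ⟨k₁, -, k₂, -, hne, hcell⟩ :=
    Finset.exists_ne_map_eq_of_card_lt_of_maps_to (by simp [Fintype.card_piFinset]) hmaps
  have key : ∀ k₁ k₂, k₁ < k₂ → cell k₁ = cell k₂ →
      ∃ k : ℕ, 0 < k ∧ ∃ n : Fin d → ℤ, ‖(k : ℝ) • v - toR n‖ < ε := by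
    intro k₁ k₂ hlt hcell
    refine ⟨k₂ - k₁, by omega, fun i => ⌊k₂ * v i⌋ - ⌊k₁ * v i⌋,
      (pi_norm_lt_iff hε).2 fun i => lt_of_le_of_lt ?_ hNε⟩
    have hi := Int.abs_sub_lt_one_of_floor_eq_floor (congrFun hcell i).symm
    rw [← mul_sub, abs_mul, abs_of_pos hNpos, ← lt_div_iff₀' hNpos] at hi
    refine le_of_lt (lt_of_eq_of_lt ?_ hi)
    simp only [Pi.sub_apply, Pi.smul_apply, smul_eq_mul, toR, Real.norm_eq_abs, Int.fract]
    push_cast [Nat.cast_sub hlt.le]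
    ring_nf
  rcases Nat.lt_or_gt_of_ne hne with h | h
  · exact key k₁ k₂ h hcell
  · exact key k₂ k₁ h hcell.symm

lemma exists_int_ne_zero_forall_dotProduct_nonneg {S : Finset (Fin d → ℤ)} {v : Fin d → ℝ}
    (hv : v ≠ 0) (hSv : ∀ s ∈ S, 0 ≤ toR s ⬝ᵥ v) :
    ∃ n ≠ 0, ∀ s ∈ S, 0 ≤ s ⬝ᵥ n := by
  set B : ℝ := ∑ s ∈ S, ∑ i, |toR s i|
  have hε : 0 < min ‖v‖ (1 / (B + 1)) := lt_min (norm_pos_iff.2 hv) (by positivity)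
  obtain ⟨k, hk, n, hn⟩ := exists_nat_int_norm_smul_sub_toR_lt v hε
  have hk1 : (1 : ℝ) ≤ k := by exact_mod_cast hk
  refine ⟨n, fun hn0 => ?_, fun s hs => ?_⟩
  · subst hn0
    have hkv : ‖(k : ℝ) • v‖ < ‖v‖ := by
      simpa using lt_of_lt_of_le hn (min_le_left _ _)
    rw [norm_smul, Real.norm_natCast] at hkv
    nlinarith [norm_nonneg v]
  -- `s ⬝ᵥ n` is an integer within distance `< 1` of `k * (s ⬝ᵥ v) ≥ 0`
  have hsB : ∑ i, |toR s i| ≤ B :=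
    Finset.single_le_sum (f := fun s => ∑ i, |toR s i|) (fun _ _ => by positivity) hs
  have herr := (abs_le.1 (abs_dotProduct_le ((k : ℝ) • v - toR n) (toR s))).2
  have hεB : ‖(k : ℝ) • v - toR n‖ * ∑ i, |toR s i| < 1 :=
    calc ‖(k : ℝ) • v - toR n‖ * ∑ i, |toR s i| ≤ 1 / (B + 1) * B :=
          mul_le_mul (hn.le.trans (min_le_right _ _)) hsB (by positivity) (by positivity)
      _ < 1 := by rw [one_div_mul_eq_div, div_lt_one (by positivity)]; linarith
  have hkv : 0 ≤ ((k : ℝ) • v) ⬝ᵥ toR s := by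
    rw [smul_dotProduct, dotProduct_comm]; exact smul_nonneg (Nat.cast_nonneg k) (hSv s hs)
  have hgt : (-1 : ℝ) < s ⬝ᵥ n := by
    rw [← toR_dotProduct_toR, dotProduct_comm]
    rw [sub_dotProduct] at herr
    linarith
  exact_mod_cast Int.lt_iff_add_one_le.1 (by exact_mod_cast hgt : (-1 : ℤ) < s ⬝ᵥ n)

section FineInterior

variable {S : Finset (Fin d → ℤ)}

lemma zero_mem_interior_of_forall_ordP_le_neg_one (hS : S.Nonempty)
    (hint : (interior (polytopeOf S)).Nonempty)
    (hord : ∀ n : Fin d → ℤ, n ≠ 0 → ordP (polytopeOf S) (toR n) ≤ -1) :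
    0 ∈ interior (polytopeOf S) := by
  by_contra h0
  obtain ⟨v, hv, hvS⟩ :=
    exists_ne_zero_forall_dotProduct_nonneg_of_interior_nonempty (convex_convexHull ℝ _) hint h0
  obtain ⟨n, hn, hnS⟩ := exists_int_ne_zero_forall_dotProduct_nonneg hv
    fun s hs => hvS _ (subset_convexHull ℝ _ ⟨s, hs, rfl⟩)
  have : (0 : ℝ) ≤ ordP (polytopeOf S) (toR n) := by
    rw [ordP_polytopeOf hS]
    exact Finset.le_inf' hS _ fun s hs => by rw [toR_dotProduct_toR]; exact_mod_cast hnS s hs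
  linarith [hord n hn]

lemma exists_ne_zero_mem_fineInterior (hS : S.Nonempty) (h0 : 0 ∈ interior (polytopeOf S))
    (h0' : 0 ∉ interior (latticeHull (polarSet (polytopeOf S)))) :
    ∃ x ≠ 0, x ∈ fineInterior (polytopeOf S) := by
  obtain ⟨u, hu, huP⟩ := exists_ne_zero_forall_dotProduct_nonneg_of_zero_mem
    (convex_convexHull ℝ _) (zero_mem_latticeHull_polarSet _) h0'
  obtain ⟨r, hr, hord⟩ := exists_pos_ordP_le_neg_mul_sum_abs hS h0
  have hu' : 0 < ‖u‖ := norm_pos_iff.2 hu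
  set t := r / (2 * ‖u‖)
  have htu : ‖t • u‖ = r / 2 := by
    rw [norm_smul, Real.norm_of_nonneg (by positivity), div_mul_eq_mul_div,
      mul_div_mul_right _ _ hu'.ne']
  refine ⟨t • u, smul_ne_zero (by positivity) hu, fun n hn => ?_⟩
  rw [pairR_eq_dotProduct]
  obtain ⟨z, hz⟩ := exists_ordP_polytopeOf_eq_intCast hS n
  have hz1 : z ≤ -1 := by exact_mod_cast hz ▸ ordP_polytopeOf_le_neg_one hS h0 hn
  rcases (by omega : z = -1 ∨ z ≤ -2) with rfl | hz2
  -- `toR n` is then a lattice point of the polar set, on which `u` is nonnegative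
  · have hpol : toR n ∈ polarSet (polytopeOf S) := by
      rw [mem_polarSet_polytopeOf_iff hS, hz]; simp
    have hnu := huP _ (subset_convexHull ℝ _ ⟨hpol, fun i => ⟨n i, rfl⟩⟩)
    rw [hz, smul_dotProduct, dotProduct_comm]
    push_cast
    simpa using smul_nonneg (by positivity : 0 ≤ t) hnu
  · have hbound := (abs_le.1 (abs_dotProduct_le (t • u) (toR n))).1
    have hzn := hord (toR n)
    rw [hz] at hzn ⊢
    have hz2' : (z : ℝ) ≤ -2 := by exact_mod_cast hz2
    rw [htu] at hbound
    linarith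

lemma fineInterior_subset_singleton_zero (hS : S.Nonempty)
    (h0 : 0 ∈ interior (latticeHull (polarSet (polytopeOf S)))) :
    fineInterior (polytopeOf S) ⊆ {0} := fun x hx =>
  eq_zero_of_forall_dotProduct_nonneg h0 fun y hy => by
    refine convexHull_min ?_ (convex_halfSpace_ge (f := (· ⬝ᵥ x))
      ⟨fun a b => add_dotProduct a b x, fun c a => smul_dotProduct c a x⟩ 0) hy
    rintro w ⟨hw, hwℤ⟩
    choose n hn using hwℤ
    obtain rfl : w = toR n := funext hn
    rcases eq_or_ne n 0 with rfl | hn0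
    · simp
    · have := hx n hn0
      rw [pairR_eq_dotProduct, dotProduct_comm] at this
      change 0 ≤ toR n ⬝ᵥ x
      linarith [(mem_polarSet_polytopeOf_iff hS).1 hw]

end FineInterior

/-- Δ^{FI} = {0} iff both Δ and [Δ*] contain 0 in their interiors. -/
theorem stmt5 {d : ℕ} (Δ : Set (Fin d → ℝ)) (h1 : IsLatticePolytope Δ)
    (h2 : (interior Δ).Nonempty) :
    fineInterior Δ = {0} ↔
      ((0 : Fin d → ℝ) ∈ interior Δ ∧
        (0 : Fin d → ℝ) ∈ interior (latticeHull (polarSet Δ))) := by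
  obtain ⟨S, rfl⟩ := h1
  have hS : S.Nonempty := by
    by_contra hS
    simp [Finset.not_nonempty_iff_eq_empty.1 hS] at h2
  constructor
  · intro h
    have hord := (zero_mem_fineInterior_iff _).1 (h ▸ Set.mem_singleton 0)
    have h0 := zero_mem_interior_of_forall_ordP_le_neg_one hS h2 hord
    refine ⟨h0, by_contra fun h0' => ?_⟩
    obtain ⟨x, hx, hxF⟩ := exists_ne_zero_mem_fineInterior hS h0 h0'
    exact hx (Set.mem_singleton_iff.1 (h ▸ hxF))
  · rintro ⟨h0, h0'⟩
    refine (fineInterior_subset_singleton_zero hS h0').antisymm (Set.singleton_subset_iff.2 ?_)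
    exact (zero_mem_fineInterior_iff _).2 fun n hn => ordP_polytopeOf_le_neg_one hS h0 hn
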